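/- Let γ : [0,1] → ℝ³ be a continuous injective curve such that the z-coordinate t ↦ z(γ(t)) is strictly monotone. Then for any two such curves γ, γ' with the same endpoints, the images are ambient isotopic in ℝ³ relative to the endpoints, via a level-preserving isotopy. -/

import Mathlib

/-! A height-monotone arc is the graph of a continuous section `c` of the height function over
the interval of heights it spans, because a continuous strictly monotone function on a compact
interval has a continuous inverse. For two such arcs with the same endpoints, the shear
`x ↦ x + s • (c' - c) (height x)` moves points only within their horizontal plane, fixes the
endpoints, and at `s = 1` carries the first graph onto the second. A height-decreasing arc is
height-increasing for the opposite height. -/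

open Set

theorem exists_continuous_leftInvOn_of_strictMonoOn {φ : ℝ → ℝ} {a b : ℝ} (hab : a ≤ b)
    (hφc : ContinuousOn φ (Icc a b)) (hφ : StrictMonoOn φ (Icc a b)) :
    ∃ σ : ℝ → ℝ, Continuous σ ∧ (∀ z, σ z ∈ Icc a b) ∧ LeftInvOn σ φ (Icc a b) ∧
      ∀ z, φ (σ z) = max (φ a) (min (φ b) z) := by
  have ha : a ∈ Icc a b := left_mem_Icc.2 hab
  have hb : b ∈ Icc a b := right_mem_Icc.2 hab
  have hφab : φ a ≤ φ b := hφ.monotoneOn ha hb hab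
  let f : Icc a b → Icc (φ a) (φ b) := fun t =>
    ⟨φ t, hφ.monotoneOn ha t.2 t.2.1, hφ.monotoneOn t.2 hb t.2.2⟩
  have hf : StrictMono f := fun s t hst => hφ s.2 t.2 hst
  have hf_surj : Function.Surjective f := fun z => by
    obtain ⟨t, ht, htz⟩ := intermediate_value_Icc hab hφc z.2
    exact ⟨⟨t, ht⟩, Subtype.ext htz⟩
  let e := StrictMono.orderIsoOfSurjective f hf hf_surj
  refine ⟨fun z => e.symm (projIcc (φ a) (φ b) hφab z), ?_, fun z => Subtype.prop _, ?_, ?_⟩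
  · exact continuous_subtype_val.comp (e.symm.continuous.comp continuous_projIcc)
  · intro t ht
    have hproj : projIcc (φ a) (φ b) hφab (φ t) = e ⟨t, ht⟩ := projIcc_of_mem hφab (f ⟨t, ht⟩).2
    simp only [hproj, OrderIso.symm_apply_apply]
  · intro z
    exact congrArg Subtype.val (e.apply_symm_apply (projIcc (φ a) (φ b) hφab z))

theorem exists_continuous_section_of_strictMonoOn {X : Type*} [TopologicalSpace X]
    {h : X → ℝ} (hh : Continuous h) {γ : ℝ → X} {a b : ℝ} (hab : a ≤ b)
    (hγc : ContinuousOn γ (Icc a b)) (hγ : StrictMonoOn (h ∘ γ) (Icc a b)) :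
    ∃ c : ℝ → X, Continuous c ∧ (∀ t ∈ Icc a b, c (h (γ t)) = γ t) ∧
      (∀ z, c z ∈ γ '' Icc a b) ∧ ∀ z, h (c z) = max (h (γ a)) (min (h (γ b)) z) := by
  obtain ⟨σ, hσc, hσ_mem, hσ_inv, hσ_clamp⟩ :=
    exists_continuous_leftInvOn_of_strictMonoOn hab (hh.comp_continuousOn hγc) hγ
  exact ⟨γ ∘ σ, hγc.comp_continuous hσc hσ_mem, fun t ht => congrArg γ (hσ_inv ht),
    fun z => mem_image_of_mem γ (hσ_mem z), hσ_clamp⟩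

section

variable {E : Type*} [AddCommGroup E] [Module ℝ E] [TopologicalSpace E] [IsTopologicalAddGroup E]

@[simps]
def Homeomorph.shear (ℓ : E →L[ℝ] ℝ) (d : ℝ → E) (hd : Continuous d) (hℓd : ∀ z, ℓ (d z) = 0) :
    E ≃ₜ E where
  toFun x := x + d (ℓ x)
  invFun x := x - d (ℓ x)
  left_inv x := by simp [hℓd]
  right_inv x := by simp [hℓd]
  continuous_toFun := by fun_prop
  continuous_invFun := by fun_prop

theorem exists_levelPreserving_isotopy_of_strictMonoOn [ContinuousSMul ℝ E] (ℓ : E →L[ℝ] ℝ)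
    {γ γ' : ℝ → E} {a b : ℝ} (hab : a ≤ b)
    (hγc : ContinuousOn γ (Icc a b)) (hγ'c : ContinuousOn γ' (Icc a b))
    (hγ : StrictMonoOn (ℓ ∘ γ) (Icc a b)) (hγ' : StrictMonoOn (ℓ ∘ γ') (Icc a b))
    (ha : γ a = γ' a) (hb : γ b = γ' b) :
    ∃ H : ℝ → (E ≃ₜ E),
      Continuous (fun p : ℝ × E => H p.1 p.2) ∧
      Continuous (fun p : ℝ × E => (H p.1).symm p.2) ∧
      H 0 = Homeomorph.refl _ ∧
      (∀ s, H s (γ a) = γ a) ∧ (∀ s, H s (γ b) = γ b) ∧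
      (∀ s x, ℓ (H s x) = ℓ x) ∧
      H 1 '' (γ '' Icc a b) = γ' '' Icc a b := by
  obtain ⟨c, hc, hcγ, hc_mem, hℓc⟩ :=
    exists_continuous_section_of_strictMonoOn ℓ.continuous hab hγc hγ
  obtain ⟨c', hc', hc'γ', hc'_mem, hℓc'⟩ :=
    exists_continuous_section_of_strictMonoOn ℓ.continuous hab hγ'c hγ'
  have hℓd : ∀ z, ℓ (c' z - c z) = 0 := fun z => by simp [hℓc, hℓc', ha, hb]
  have hd_a : c' (ℓ (γ a)) - c (ℓ (γ a)) = 0 := by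
    rw [hcγ a (left_mem_Icc.2 hab), ha, hc'γ' a (left_mem_Icc.2 hab), sub_self]
  have hd_b : c' (ℓ (γ b)) - c (ℓ (γ b)) = 0 := by
    rw [hcγ b (right_mem_Icc.2 hab), hb, hc'γ' b (right_mem_Icc.2 hab), sub_self]
  let H : ℝ → E ≃ₜ E := fun s =>
    Homeomorph.shear ℓ (fun z => s • (c' z - c z)) (by fun_prop) (fun z => by simp [hℓd])
  have hH_section : ∀ z, ℓ (c z) = z → H 1 (c z) = c' z := fun z hz => by simp [H, hz]
  refine ⟨H, by simp only [H, Homeomorph.shear_apply]; fun_prop,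
    by simp only [H, Homeomorph.shear_symm_apply]; fun_prop, by ext; simp [H],
    fun s => by simp [H, hd_a], fun s => by simp [H, hd_b], fun s x => by simp [H, hℓd], ?_⟩
  apply Subset.antisymm
  · rintro _ ⟨_, ⟨t, ht, rfl⟩, rfl⟩
    have hz : ℓ (c (ℓ (γ t))) = ℓ (γ t) := by rw [hcγ t ht]
    rw [← hcγ t ht, hH_section _ hz]
    exact hc'_mem _
  · rintro _ ⟨t, ht, rfl⟩
    have hta : ℓ (γ' a) ≤ ℓ (γ' t) := hγ'.monotoneOn (left_mem_Icc.2 hab) ht ht.1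
    have htb : ℓ (γ' t) ≤ ℓ (γ' b) := hγ'.monotoneOn ht (right_mem_Icc.2 hab) ht.2
    have hz : ℓ (c (ℓ (γ' t))) = ℓ (γ' t) := by
      rw [hℓc, ha, hb, min_eq_right htb, max_eq_right hta]
    exact ⟨c (ℓ (γ' t)), hc_mem _, by rw [hH_section _ hz, hc'γ' t ht]⟩

end

theorem monotone_arcs_ambient_isotopic_general
    (γ γ' : ℝ → EuclideanSpace ℝ (Fin 3))
    (hγc : ContinuousOn γ (Set.Icc 0 1)) (hγ'c : ContinuousOn γ' (Set.Icc 0 1))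
    (hmono : StrictMonoOn (fun t => γ t 2) (Set.Icc 0 1) ∨
      StrictAntiOn (fun t => γ t 2) (Set.Icc 0 1))
    (hmono' : StrictMonoOn (fun t => γ' t 2) (Set.Icc 0 1) ∨
      StrictAntiOn (fun t => γ' t 2) (Set.Icc 0 1))
    (h0 : γ 0 = γ' 0) (h1 : γ 1 = γ' 1) :
    ∃ H : ℝ → (EuclideanSpace ℝ (Fin 3) ≃ₜ EuclideanSpace ℝ (Fin 3)),
      Continuous (fun p : ℝ × EuclideanSpace ℝ (Fin 3) => H p.1 p.2) ∧
      Continuous (fun p : ℝ × EuclideanSpace ℝ (Fin 3) => (H p.1).symm p.2) ∧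
      H 0 = Homeomorph.refl _ ∧
      (∀ s, H s (γ 0) = γ 0) ∧ (∀ s, H s (γ 1) = γ 1) ∧
      -- level-preserving: each homeomorphism preserves the z-coordinate
      (∀ s x, (H s x) 2 = x 2) ∧
      H 1 '' (γ '' Set.Icc 0 1) = γ' '' Set.Icc 0 1 := by
  have h01 : (0 : ℝ) ∈ Icc (0 : ℝ) 1 := left_mem_Icc.2 zero_le_one
  have h11 : (1 : ℝ) ∈ Icc (0 : ℝ) 1 := right_mem_Icc.2 zero_le_one
  rcases hmono with hγ | hγ <;> rcases hmono' with hγ' | hγ'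
  · exact exists_levelPreserving_isotopy_of_strictMonoOn (EuclideanSpace.proj 2) zero_le_one
      hγc hγ'c hγ hγ' h0 h1
  · exact absurd (hγ h01 h11 zero_lt_one) (by simpa [h0, h1] using (hγ' h01 h11 zero_lt_one).not_gt)
  · exact absurd (hγ h01 h11 zero_lt_one) (by simpa [h0, h1] using (hγ' h01 h11 zero_lt_one).not_gt)
  · obtain ⟨H, hH, hH_symm, hH0, hHa, hHb, hH_level, hH1⟩ :=
      exists_levelPreserving_isotopy_of_strictMonoOn (-EuclideanSpace.proj 2) zero_le_one
        hγc hγ'c hγ.neg hγ'.neg h0 h1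
    exact ⟨H, hH, hH_symm, hH0, hHa, hHb, fun s x => neg_inj.1 (hH_level s x), hH1⟩

/-- Denne–Sullivan, single-edge case: two height-monotone simple arcs in
`ℝ³` with the same endpoints are ambient isotopic rel endpoints, via a level-preserving
ambient isotopy. -/
theorem monotone_arcs_ambient_isotopic
    (γ γ' : ℝ → EuclideanSpace ℝ (Fin 3))
    (hγc : ContinuousOn γ (Set.Icc 0 1)) (hγ'c : ContinuousOn γ' (Set.Icc 0 1))
    (hγi : Set.InjOn γ (Set.Icc 0 1)) (hγ'i : Set.InjOn γ' (Set.Icc 0 1))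
    (hmono : StrictMonoOn (fun t => γ t 2) (Set.Icc 0 1) ∨
      StrictAntiOn (fun t => γ t 2) (Set.Icc 0 1))
    (hmono' : StrictMonoOn (fun t => γ' t 2) (Set.Icc 0 1) ∨
      StrictAntiOn (fun t => γ' t 2) (Set.Icc 0 1))
    (h0 : γ 0 = γ' 0) (h1 : γ 1 = γ' 1) :
    ∃ H : ℝ → (EuclideanSpace ℝ (Fin 3) ≃ₜ EuclideanSpace ℝ (Fin 3)),
      Continuous (fun p : ℝ × EuclideanSpace ℝ (Fin 3) => H p.1 p.2) ∧
      Continuous (fun p : ℝ × EuclideanSpace ℝ (Fin 3) => (H p.1).symm p.2) ∧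
      H 0 = Homeomorph.refl _ ∧
      (∀ s, H s (γ 0) = γ 0) ∧ (∀ s, H s (γ 1) = γ 1) ∧
      -- level-preserving: each homeomorphism preserves the z-coordinate
      (∀ s x, (H s x) 2 = x 2) ∧
      H 1 '' (γ '' Set.Icc 0 1) = γ' '' Set.Icc 0 1 :=
  monotone_arcs_ambient_isotopic_general γ γ' hγc hγ'c hmono hmono' h0 h1
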